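/- Let C(G) be the directed cone over a directed graph G, obtained by adding a new vertex ⋆ and directed edges (x,⋆) for every vertex x of G. Then EMH_{0,0}(C(G)) ≅ EMH_{0,0}(G) ⊕ ℤ, and for all (k,ℓ) ≠ (0,0), EMH_{k,ℓ}(C(G)) ≅ EMH_{k,ℓ}(G) ⊕ EMH_{k-1,ℓ-1}(G). -/

import Mathlib

open scoped Classical

/-- Reachability in a directed graph given by its adjacency relation. -/
def dreach {V : Type} (A : V → V → Prop) : V → V → Prop :=
  Relation.ReflTransGen A

/-- Directed distance: minimal length of a directed path from `x` to `y`. -/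
noncomputable def ddist {V : Type} (A : V → V → Prop) (x y : V) : ℕ :=
  sInf {n | ∃ p : Fin (n + 1) → V, p 0 = x ∧ p (Fin.last n) = y ∧
    ∀ i : Fin n, A (p i.castSucc) (p i.succ)}

/-- Length of a tuple of vertices: sum of consecutive directed distances. -/
noncomputable def dlen {V : Type} (A : V → V → Prop) {k : ℕ} (x : Fin (k + 1) → V) : ℕ :=
  ∑ i : Fin k, ddist A (x i.castSucc) (x i.succ)

/-- Generators of the (k,ℓ) eulerian magnitude chain group of a directed graph:
tuples of k+1 pairwise distinct vertices, each reachable from the previous one,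
of total length ℓ. -/
def demcGen {V : Type} (A : V → V → Prop) (k ℓ : ℕ) : Set (Fin (k + 1) → V) :=
  {x | Function.Injective x ∧ (∀ i : Fin k, dreach A (x i.castSucc) (x i.succ)) ∧
    dlen A x = ℓ}

/-- The (k,ℓ) eulerian magnitude chain group of a directed graph. -/
abbrev dEMC {V : Type} (A : V → V → Prop) (k ℓ : ℕ) : Type :=
  demcGen A k ℓ →₀ ℤ

/-- The `i`-th face: delete the `i`-th vertex if the result is again a generator,
and `0` otherwise. -/
noncomputable def demcFace {V : Type} (A : V → V → Prop) (k ℓ : ℕ) (i : Fin (k + 2))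
    (x : demcGen A (k + 1) ℓ) : dEMC A k ℓ :=
  if h : ((x : Fin (k + 2) → V) ∘ i.succAbove) ∈ demcGen A k ℓ then
    Finsupp.single ⟨_, h⟩ 1 else 0

/-- The eulerian magnitude differential: alternating sum of interior-vertex deletions. -/
noncomputable def demcD {V : Type} (A : V → V → Prop) (k ℓ : ℕ) :
    dEMC A (k + 1) ℓ →ₗ[ℤ] dEMC A k ℓ :=
  Finsupp.lift (dEMC A k ℓ) ℤ (demcGen A (k + 1) ℓ) fun x =>
    ∑ i : Fin (k + 2),
      if i = 0 ∨ i = Fin.last (k + 1) then 0 else ((-1 : ℤ) ^ (i : ℕ)) • demcFace A k ℓ i x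

/-- Cycles of the eulerian magnitude chain complex in degree `k`. -/
noncomputable def demcCycles {V : Type} (A : V → V → Prop) (k ℓ : ℕ) :
    Submodule ℤ (dEMC A k ℓ) :=
  match k with
  | 0 => ⊤
  | k + 1 => LinearMap.ker (demcD A k ℓ)

/-- Eulerian magnitude homology of a directed graph in bidegree (k,ℓ). -/
noncomputable abbrev dEMH {V : Type} (A : V → V → Prop) (k ℓ : ℕ) :=
  demcCycles A k ℓ ⧸
    Submodule.comap (demcCycles A k ℓ).subtype (LinearMap.range (demcD A k ℓ))

/-- The directed cone over a directed graph: a new vertex `⋆ = none` is added, together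
with a directed edge `(x,⋆)` for every vertex `x` of `G`. -/
def coneGraph {V : Type} (A : V → V → Prop) : Option V → Option V → Prop
  | some x, some y => A x y
  | some _, none => True
  | none, _ => False

/-!
The apex `⋆` of the cone is a sink, so in a generator of `C(G)` it can only be the last vertex,
and `d(x, ⋆) = 1` for every `x`, while distances between vertices of `G` are the same in `C(G)`.
Hence in bidegree `(k + 1, ℓ + 1)` the generators of `C(G)` are those of `G` together with the
tuples `(x, ⋆)` for `x` a generator of `G` in bidegree `(k, ℓ)`. Interior deletions respect this
splitting with the same signs, and deleting the vertex just before `⋆` never yields a generator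
since it shortens the tuple; so the chain complex of `C(G)` is the direct sum of that of `G` and
its shift by `(1, 1)`. In bidegree `(0, 0)` the only new generator is `(⋆)`, and the remaining
bidegrees carry no generators at all.
-/

section Distance

variable {V : Type} {A : V → V → Prop}

def pathLengths (A : V → V → Prop) (x y : V) : Set ℕ :=
  {n | ∃ p : Fin (n + 1) → V, p 0 = x ∧ p (Fin.last n) = y ∧
    ∀ i : Fin n, A (p i.castSucc) (p i.succ)}

theorem ddist_eq_sInf_pathLengths (x y : V) : ddist A x y = sInf (pathLengths A x y) := rfl

theorem zero_mem_pathLengths_iff {x y : V} : 0 ∈ pathLengths A x y ↔ x = y := by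
  constructor
  · rintro ⟨p, rfl, rfl, -⟩
    rfl
  · rintro rfl
    exact ⟨fun _ => x, rfl, rfl, fun i => i.elim0⟩

theorem pathLengths_nonempty {x y : V} (h : dreach A x y) : (pathLengths A x y).Nonempty := by
  induction h with
  | refl => exact ⟨0, zero_mem_pathLengths_iff.2 rfl⟩
  | @tail b c _ hbc ih =>
    obtain ⟨n, p, h0, hn, hp⟩ := ih
    refine ⟨n + 1, Fin.snoc p c, by simpa using h0, by simp, Fin.lastCases ?_ fun i => ?_⟩
    · simpa [hn] using hbc
    · simpa [Fin.succ_castSucc, -Fin.castSucc_succ] using hp i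

theorem ddist_eq_zero_iff {x y : V} (h : dreach A x y) : ddist A x y = 0 ↔ x = y := by
  rw [ddist_eq_sInf_pathLengths, Nat.sInf_eq_zero, or_iff_left (pathLengths_nonempty h).ne_empty,
    zero_mem_pathLengths_iff]

theorem ddist_eq_one {x y : V} (h : A x y) (hne : x ≠ y) : ddist A x y = 1 := by
  refine le_antisymm (Nat.sInf_le ⟨![x, y], rfl, rfl, fun i => ?_⟩) ?_
  · fin_cases i
    exact h
  · exact Nat.one_le_iff_ne_zero.2 fun h0 => hne ((ddist_eq_zero_iff (.single h)).1 h0)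

theorem dlen_snoc {k : ℕ} (x : Fin (k + 1) → V) (v : V) :
    dlen A (Fin.snoc x v : Fin (k + 2) → V) = dlen A x + ddist A (x (Fin.last k)) v := by
  simp [dlen, Fin.sum_univ_castSucc, Fin.succ_castSucc, -Fin.castSucc_succ]

end Distance

section Subquotient

variable {R M N M' N' : Type*} [CommRing R] [AddCommGroup M] [Module R M] [AddCommGroup N]
  [Module R N] [AddCommGroup M'] [Module R M'] [AddCommGroup N'] [Module R N']

theorem map_ker_eq_of_comp_eq (e : M ≃ₗ[R] N) (e' : M' ≃ₗ[R] N') {f : M →ₗ[R] M'}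
    {g : N →ₗ[R] N'} (h : g ∘ₗ e.toLinearMap = e'.toLinearMap ∘ₗ f) :
    (LinearMap.ker f).map e.toLinearMap = LinearMap.ker g := by
  have hg : g = (e'.toLinearMap ∘ₗ f) ∘ₗ e.symm.toLinearMap := by
    rw [← h, LinearMap.comp_assoc, e.comp_symm, LinearMap.comp_id]
  rw [hg, LinearMap.ker_comp, LinearEquiv.ker_comp, Submodule.map_equiv_eq_comap_symm]

theorem map_range_eq_of_comp_eq (e : M ≃ₗ[R] N) (e' : M' ≃ₗ[R] N') {f : M →ₗ[R] M'}
    {g : N →ₗ[R] N'} (h : g ∘ₗ e.toLinearMap = e'.toLinearMap ∘ₗ f) :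
    (LinearMap.range f).map e'.toLinearMap = LinearMap.range g := by
  rw [← LinearMap.range_comp, ← h, LinearMap.range_comp, LinearEquiv.range, Submodule.map_top]

noncomputable def subquotientEquiv (e : M ≃ₗ[R] N) {p r : Submodule R M} {q s : Submodule R N}
    (hpq : p.map e.toLinearMap = q) (hrs : r.map e.toLinearMap = s) :
    (p ⧸ r.comap p.subtype) ≃ₗ[R] q ⧸ s.comap q.subtype :=
  Submodule.Quotient.equiv _ _ (e.ofSubmodules p q hpq) <| by
    ext x
    rw [Submodule.mem_map_equiv, Submodule.mem_comap, Submodule.mem_comap, ← hrs,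
      Submodule.mem_map_equiv]
    rfl

noncomputable def quotientProdEquiv (p : Submodule R M) (q : Submodule R N) :
    ((M × N) ⧸ p.prod q) ≃ₗ[R] (M ⧸ p) × (N ⧸ q) :=
  (Submodule.quotEquivOfEq _ _ (by rw [LinearMap.ker_prodMap, Submodule.ker_mkQ,
      Submodule.ker_mkQ])).trans
    (LinearMap.quotKerEquivOfSurjective (p.mkQ.prodMap q.mkQ)
      (Prod.map_surjective.2 ⟨p.mkQ_surjective, q.mkQ_surjective⟩))

def submoduleProdEquiv (p : Submodule R M) (q : Submodule R N) : p.prod q ≃ₗ[R] p × q :=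
  { p.toAddSubmonoid.prodEquiv q.toAddSubmonoid with map_smul' := fun _ _ => rfl }

noncomputable def subquotientProdEquiv (p r : Submodule R M) (q s : Submodule R N) :
    (p.prod q ⧸ (r.prod s).comap (p.prod q).subtype) ≃ₗ[R]
      (p ⧸ r.comap p.subtype) × (q ⧸ s.comap q.subtype) :=
  (Submodule.Quotient.equiv _ _ (submoduleProdEquiv p q) (by ext; simp; rfl)).trans
    (quotientProdEquiv _ _)

end Subquotient

section Faces

variable {V V' : Type} {A : V → V → Prop} {A' : V' → V' → Prop}

theorem snoc_comp_castSucc_succAbove {α : Type*} {n : ℕ} (x : Fin (n + 1) → α) (a : α)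
    (i : Fin (n + 1)) :
    (Fin.snoc x a : Fin (n + 2) → α) ∘ i.castSucc.succAbove =
      Fin.snoc (x ∘ i.succAbove) a := by
  funext j
  rcases Fin.eq_castSucc_or_eq_last j with ⟨j, rfl⟩ | rfl
  · rcases lt_or_ge j.castSucc i with h | h
    · simp [Fin.succAbove_castSucc_of_lt _ _ h, Fin.succAbove_of_castSucc_lt _ _ h]
    · simp [Fin.succAbove_castSucc_of_le _ _ h, Fin.succAbove_of_le_castSucc _ _ h,
        Fin.succ_castSucc, -Fin.castSucc_succ]
  · simp [Fin.succAbove_of_le_castSucc _ _ (Fin.castSucc_le_castSucc_iff.2 (Fin.le_last i))]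

theorem demcD_single {k ℓ : ℕ} (x : demcGen A (k + 1) ℓ) :
    demcD A k ℓ (Finsupp.single x 1) =
      ∑ i : Fin (k + 2), if i = 0 ∨ i = Fin.last (k + 1) then 0
        else ((-1 : ℤ) ^ (i : ℕ)) • demcFace A k ℓ i x := by
  rw [demcD, Finsupp.lift_apply, Finsupp.sum_single_index (by simp), one_smul]

theorem demcFace_eq_mapDomain {k k' ℓ ℓ' : ℕ}
    (F : (Fin (k + 1) → V) → (Fin (k' + 1) → V'))
    (hF : ∀ y, F y ∈ demcGen A' k' ℓ' ↔ y ∈ demcGen A k ℓ)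
    (f : demcGen A k ℓ → demcGen A' k' ℓ') (hf : ∀ y, (f y : Fin (k' + 1) → V') = F y)
    (x : demcGen A (k + 1) ℓ) (x' : demcGen A' (k' + 1) ℓ') (i : Fin (k + 2)) (j : Fin (k' + 2))
    (hx : (x' : Fin (k' + 2) → V') ∘ j.succAbove = F (x ∘ i.succAbove)) :
    demcFace A' k' ℓ' j x' = (demcFace A k ℓ i x).mapDomain f := by
  unfold demcFace
  by_cases h : (x : Fin (k + 2) → V) ∘ i.succAbove ∈ demcGen A k ℓ
  · rw [dif_pos (hx ▸ (hF _).2 h), dif_pos h, Finsupp.mapDomain_single]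
    exact congrArg (Finsupp.single · 1) (Subtype.ext (hx.trans (hf ⟨_, h⟩).symm))
  · rw [dif_neg (hx ▸ (hF _).not.2 h), dif_neg h, Finsupp.mapDomain_zero]

theorem demcFace_last {k ℓ : ℕ} (x : demcGen A (k + 1) ℓ) :
    demcFace A k ℓ (Fin.last (k + 1)) x = 0 := by
  obtain ⟨x, hinj, hreach, hlen⟩ := x
  refine dif_neg ?_
  rw [Fin.succAbove_last]
  rintro ⟨-, -, hlen'⟩
  have hsplit := dlen_snoc (A := A) (Fin.init x) (x (Fin.last (k + 1)))
  rw [Fin.snoc_init_self] at hsplit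
  have hstep : ddist A (x (Fin.last k).castSucc) (x (Fin.last (k + 1))) ≠ 0 := by
    rw [← Fin.succ_last, Ne, ddist_eq_zero_iff (hreach _)]
    exact hinj.ne Fin.castSucc_lt_succ.ne
  change dlen A (Fin.init x) = ℓ at hlen'
  simp only [Fin.init] at hsplit hlen'
  omega

end Faces

section LowDegrees

variable {V : Type} {A : V → V → Prop}

instance isEmpty_demcGen_zero_succ (ℓ : ℕ) : IsEmpty (demcGen A 0 (ℓ + 1)) :=
  ⟨fun ⟨_, _, _, hlen⟩ => by simp [dlen] at hlen⟩

instance isEmpty_demcGen_succ_zero (k : ℕ) : IsEmpty (demcGen A (k + 1) 0) :=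
  ⟨fun ⟨_, hinj, hreach, hlen⟩ =>
    hinj.ne Fin.castSucc_lt_succ.ne <| (ddist_eq_zero_iff (hreach 0)).1 <|
      Finset.sum_eq_zero_iff.1 hlen 0 (Finset.mem_univ _)⟩

def demcGenZeroZeroEquiv (A : V → V → Prop) : demcGen A 0 0 ≃ V :=
  (Equiv.subtypeUnivEquiv fun _ =>
    ⟨fun a b _ => Subsingleton.elim (α := Fin 1) a b, fun i => i.elim0, by simp [dlen]⟩).trans
    (Equiv.funUnique (Fin 1) V)

noncomputable def dEMHZeroZeroEquiv (A : V → V → Prop) : dEMH A 0 0 ≃ₗ[ℤ] dEMC A 0 0 :=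
  (Submodule.quotEquivOfEqBot _ (by
    rw [Subsingleton.elim (demcD A 0 0) 0, LinearMap.range_zero, Submodule.comap_bot,
      Submodule.ker_subtype])).trans Submodule.topEquiv

end LowDegrees

section Cone

variable {V : Type} {A : V → V → Prop}

theorem dreach_coneGraph_none_iff {z : Option V} : dreach (coneGraph A) none z ↔ z = none :=
  Relation.reflTransGen_iff_eq fun _ => id

theorem dreach_coneGraph_some_iff {x y : V} :
    dreach (coneGraph A) (some x) (some y) ↔ dreach A x y := by
  refine ⟨fun h => ?_, fun h => Relation.ReflTransGen.lift some (fun _ _ => id) _ _ h⟩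
  suffices ∀ a, dreach (coneGraph A) a (some y) → ∀ x, a = some x → dreach A x y from
    this _ h x rfl
  intro a ha
  induction ha using Relation.ReflTransGen.head_induction_on with
  | refl => rintro x ⟨⟩; exact .refl
  | @head a c hac hcy ih =>
    rintro x rfl
    cases c with
    | none => exact absurd (dreach_coneGraph_none_iff.1 hcy) (Option.some_ne_none y)
    | some c => exact .head hac (ih c rfl)

theorem pathLengths_coneGraph_some (x y : V) :
    pathLengths (coneGraph A) (some x) (some y) = pathLengths A x y := by
  ext n
  constructor
  · rintro ⟨p, h0, hn, hp⟩
    have hsome : ∀ i, ∃ v, p i = some v := by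
      intro i
      rcases Fin.eq_castSucc_or_eq_last i with ⟨j, rfl⟩ | rfl
      · have hj := hp j
        cases h : p j.castSucc with
        | none => rw [h] at hj; exact hj.elim
        | some v => exact ⟨v, rfl⟩
      · exact ⟨y, hn⟩
    choose q hq using hsome
    refine ⟨q, ?_, ?_, fun i => ?_⟩
    · exact Option.some_injective _ ((hq 0).symm.trans h0)
    · exact Option.some_injective _ ((hq _).symm.trans hn)
    · simpa [hq, coneGraph] using hp i
  · rintro ⟨p, h0, hn, hp⟩
    exact ⟨some ∘ p, congrArg some h0, congrArg some hn, hp⟩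

theorem ddist_coneGraph_some (x y : V) :
    ddist (coneGraph A) (some x) (some y) = ddist A x y := by
  rw [ddist_eq_sInf_pathLengths, pathLengths_coneGraph_some, ddist_eq_sInf_pathLengths]

theorem dreach_coneGraph_some_none (x : V) : dreach (coneGraph A) (some x) none :=
  .single trivial

theorem ddist_coneGraph_some_none (x : V) : ddist (coneGraph A) (some x) none = 1 :=
  ddist_eq_one trivial (Option.some_ne_none x)

theorem dlen_coneGraph_comp_some {k : ℕ} (y : Fin (k + 1) → V) :
    dlen (coneGraph A) (some ∘ y) = dlen A y := by
  simp only [dlen, Function.comp_apply, ddist_coneGraph_some]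

theorem dlen_coneGraph_snoc_none {k : ℕ} (y : Fin (k + 1) → V) :
    dlen (coneGraph A) (Fin.snoc (some ∘ y) none : Fin (k + 2) → Option V) = dlen A y + 1 := by
  rw [dlen_snoc, dlen_coneGraph_comp_some, Function.comp_apply, ddist_coneGraph_some_none]

theorem comp_some_mem_demcGen_coneGraph_iff {k ℓ : ℕ} {y : Fin (k + 1) → V} :
    some ∘ y ∈ demcGen (coneGraph A) k ℓ ↔ y ∈ demcGen A k ℓ := by
  simp only [demcGen, Set.mem_ofPred_eq, (Option.some_injective V).of_comp_iff,
    Function.comp_apply, dreach_coneGraph_some_iff, dlen_coneGraph_comp_some]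

theorem snoc_none_mem_demcGen_coneGraph_iff {k ℓ : ℕ} {y : Fin (k + 1) → V} :
    (Fin.snoc (some ∘ y) none : Fin (k + 2) → Option V) ∈
      demcGen (coneGraph A) (k + 1) (ℓ + 1) ↔ y ∈ demcGen A k ℓ := by
  simp [demcGen, Fin.snoc_injective_iff, Fin.forall_fin_succ',
    (Option.some_injective V).of_comp_iff, dreach_coneGraph_some_iff, dreach_coneGraph_some_none,
    dlen_coneGraph_snoc_none, Fin.succ_castSucc, -Fin.castSucc_succ]

def coneIncl (A : V → V → Prop) (k ℓ : ℕ) (y : demcGen A k ℓ) :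
    demcGen (coneGraph A) k ℓ :=
  ⟨some ∘ y, comp_some_mem_demcGen_coneGraph_iff.2 y.2⟩

def coneApex (A : V → V → Prop) (k ℓ : ℕ) (y : demcGen A k ℓ) :
    demcGen (coneGraph A) (k + 1) (ℓ + 1) :=
  ⟨Fin.snoc (some ∘ y) none, snoc_none_mem_demcGen_coneGraph_iff.2 y.2⟩

theorem exists_some_of_mem_demcGen_coneGraph {n ℓ : ℕ} {x : Fin (n + 2) → Option V}
    (hx : x ∈ demcGen (coneGraph A) (n + 1) ℓ) (i : Fin (n + 1)) :
    ∃ v, x i.castSucc = some v := by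
  obtain ⟨hinj, hreach, -⟩ := hx
  cases h : x i.castSucc with
  | some v => exact ⟨v, rfl⟩
  | none =>
    have hnext := dreach_coneGraph_none_iff.1 (h ▸ hreach i)
    exact absurd (hinj (hnext.trans h.symm)) i.castSucc_lt_succ.ne'

theorem coneIncl_coneApex_bijective (k ℓ : ℕ) :
    Function.Bijective (Sum.elim (coneIncl A (k + 1) (ℓ + 1)) (coneApex A k ℓ)) := by
  refine ⟨Function.Injective.sumElim ?_ ?_ fun a b hab => ?_, fun x => ?_⟩
  · intro a b hab
    exact Subtype.ext ((Option.some_injective V).comp_left (congrArg Subtype.val hab))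
  · intro a b hab
    have := congrArg (fun x => Fin.init x.1) hab
    simp only [coneApex, Fin.init_snoc] at this
    exact Subtype.ext ((Option.some_injective V).comp_left this)
  · have := congrFun (congrArg Subtype.val hab) (Fin.last _)
    simp [coneIncl, coneApex] at this
  · choose y hy using exists_some_of_mem_demcGen_coneGraph x.2
    have hinit : Fin.init x.1 = some ∘ y := funext hy
    have hx := Fin.snoc_init_self x.1
    rw [hinit] at hx
    cases hlast : x.1 (Fin.last (k + 1)) with
    | none =>
      rw [hlast] at hx
      exact ⟨.inr ⟨y, snoc_none_mem_demcGen_coneGraph_iff.1 (hx ▸ x.2)⟩, Subtype.ext hx⟩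
    | some v =>
      rw [hlast, ← Fin.comp_snoc] at hx
      exact ⟨.inl ⟨Fin.snoc y v, comp_some_mem_demcGen_coneGraph_iff.1 (hx ▸ x.2)⟩,
        Subtype.ext hx⟩

noncomputable def coneGenEquiv (A : V → V → Prop) (k ℓ : ℕ) :
    demcGen A (k + 1) (ℓ + 1) ⊕ demcGen A k ℓ ≃ demcGen (coneGraph A) (k + 1) (ℓ + 1) :=
  Equiv.ofBijective _ (coneIncl_coneApex_bijective k ℓ)

noncomputable def coneChainEquiv (A : V → V → Prop) (k ℓ : ℕ) :
    (dEMC A (k + 1) (ℓ + 1) × dEMC A k ℓ) ≃ₗ[ℤ] dEMC (coneGraph A) (k + 1) (ℓ + 1) :=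
  (Finsupp.sumFinsuppLEquivProdFinsupp ℤ).symm ≪≫ₗ Finsupp.domLCongr (coneGenEquiv A k ℓ)

theorem coneChainEquiv_eq_coprod (k ℓ : ℕ) :
    (coneChainEquiv A k ℓ).toLinearMap =
      (Finsupp.lmapDomain ℤ ℤ (coneIncl A (k + 1) (ℓ + 1))).coprod
        (Finsupp.lmapDomain ℤ ℤ (coneApex A k ℓ)) := by
  refine LinearMap.prod_ext (Finsupp.lhom_ext' fun a => LinearMap.ext_ring ?_)
    (Finsupp.lhom_ext' fun a => LinearMap.ext_ring ?_) <;>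
  simp [coneChainEquiv, Finsupp.sumFinsuppLEquivProdFinsupp, coneGenEquiv]

theorem demcFace_coneIncl {k ℓ : ℕ} (i : Fin (k + 2)) (x : demcGen A (k + 1) ℓ) :
    demcFace (coneGraph A) k ℓ i (coneIncl A (k + 1) ℓ x) =
      (demcFace A k ℓ i x).mapDomain (coneIncl A k ℓ) :=
  demcFace_eq_mapDomain (some ∘ ·) (fun _ => comp_some_mem_demcGen_coneGraph_iff) _
    (fun _ => rfl) x _ i i rfl

theorem demcFace_coneApex {k ℓ : ℕ} (i : Fin (k + 2)) (x : demcGen A (k + 1) ℓ) :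
    demcFace (coneGraph A) (k + 1) (ℓ + 1) i.castSucc (coneApex A (k + 1) ℓ x) =
      (demcFace A k ℓ i x).mapDomain (coneApex A k ℓ) :=
  demcFace_eq_mapDomain (fun y => Fin.snoc (some ∘ y) none)
    (fun _ => snoc_none_mem_demcGen_coneGraph_iff) _ (fun _ => rfl) x _ i i.castSucc
    (snoc_comp_castSucc_succAbove _ _ i)

theorem demcD_comp_lmapDomain_coneIncl (k ℓ : ℕ) :
    demcD (coneGraph A) k ℓ ∘ₗ Finsupp.lmapDomain ℤ ℤ (coneIncl A (k + 1) ℓ) =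
      Finsupp.lmapDomain ℤ ℤ (coneIncl A k ℓ) ∘ₗ demcD A k ℓ := by
  refine Finsupp.lhom_ext' fun x => LinearMap.ext_ring ?_
  simp only [LinearMap.comp_apply, Finsupp.lsingle_apply, Finsupp.lmapDomain_apply,
    Finsupp.mapDomain_single, demcD_single, Finsupp.mapDomain_finsetSum]
  refine Finset.sum_congr rfl fun i _ => ?_
  split_ifs
  · rw [Finsupp.mapDomain_zero]
  · rw [Finsupp.mapDomain_smul, demcFace_coneIncl]

theorem demcD_comp_lmapDomain_coneApex (k ℓ : ℕ) :
    demcD (coneGraph A) (k + 1) (ℓ + 1) ∘ₗ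
        Finsupp.lmapDomain ℤ ℤ (coneApex A (k + 1) ℓ) =
      Finsupp.lmapDomain ℤ ℤ (coneApex A k ℓ) ∘ₗ demcD A k ℓ := by
  refine Finsupp.lhom_ext' fun x => LinearMap.ext_ring ?_
  simp only [LinearMap.comp_apply, Finsupp.lsingle_apply, Finsupp.lmapDomain_apply,
    Finsupp.mapDomain_single, demcD_single, Finsupp.mapDomain_finsetSum]
  rw [Fin.sum_univ_castSucc, if_pos (Or.inr rfl), add_zero]
  refine Finset.sum_congr rfl fun i _ => ?_
  have hcond : (i.castSucc = 0 ∨ i.castSucc = Fin.last (k + 2)) ↔ i = 0 := by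
    simp [(Fin.castSucc_lt_last i).ne]
  rw [if_congr hcond rfl rfl]
  by_cases h0 : i = 0
  · rw [if_pos h0, if_pos (Or.inl h0), Finsupp.mapDomain_zero]
  by_cases hl : i = Fin.last (k + 1)
  · -- the vertex before `⋆` is interior in the cone but an endpoint in `G`
    rw [if_neg h0, if_pos (Or.inr hl), Finsupp.mapDomain_zero, demcFace_coneApex, hl,
      demcFace_last, Finsupp.mapDomain_zero, smul_zero]
  · rw [if_neg h0, if_neg (not_or.2 ⟨h0, hl⟩), Finsupp.mapDomain_smul, demcFace_coneApex,
      Fin.val_castSucc]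

theorem demcD_comp_coneChainEquiv (k ℓ : ℕ) :
    demcD (coneGraph A) (k + 1) (ℓ + 1) ∘ₗ (coneChainEquiv A (k + 1) ℓ).toLinearMap =
      (coneChainEquiv A k ℓ).toLinearMap ∘ₗ
        (demcD A (k + 1) (ℓ + 1)).prodMap (demcD A k ℓ) := by
  rw [coneChainEquiv_eq_coprod, coneChainEquiv_eq_coprod, LinearMap.comp_coprod,
    demcD_comp_lmapDomain_coneIncl, demcD_comp_lmapDomain_coneApex]
  exact LinearMap.ext fun x => by simp

noncomputable def coneChainZeroZeroEquiv (A : V → V → Prop) :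
    dEMC (coneGraph A) 0 0 ≃ₗ[ℤ] dEMC A 0 0 × ℤ :=
  Finsupp.domLCongr ((demcGenZeroZeroEquiv _).trans (Equiv.optionEquivSumPUnit.{0} V)) ≪≫ₗ
    Finsupp.sumFinsuppLEquivProdFinsupp ℤ ≪≫ₗ
    (Finsupp.domLCongr (demcGenZeroZeroEquiv A).symm).prodCongr
      (Finsupp.uniqueLinearEquiv ℤ ℤ PUnit.unit)

theorem map_coneChainEquiv_demcCycles (k ℓ : ℕ) :
    ((demcCycles A (k + 1) (ℓ + 1)).prod (demcCycles A k ℓ)).map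
      (coneChainEquiv A k ℓ).toLinearMap = demcCycles (coneGraph A) (k + 1) (ℓ + 1) := by
  cases k with
  | zero =>
    -- both kernels are everything, as there are no generators in bidegree `(0, ℓ + 1)`
    change ((LinearMap.ker (demcD A 0 (ℓ + 1))).prod ⊤).map _ =
      LinearMap.ker (demcD (coneGraph A) 0 (ℓ + 1))
    rw [LinearMap.ker_eq_top.2 (Subsingleton.elim _ _), LinearMap.ker_eq_top.2
      (Subsingleton.elim _ _), (Submodule.prod_eq_top_iff ..).2 ⟨rfl, rfl⟩, Submodule.map_top,
      LinearEquiv.range]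
  | succ k =>
    change ((LinearMap.ker (demcD A (k + 1) (ℓ + 1))).prod
      (LinearMap.ker (demcD A k ℓ))).map _ =
      LinearMap.ker (demcD (coneGraph A) (k + 1) (ℓ + 1))
    rw [← LinearMap.ker_prodMap]
    exact map_ker_eq_of_comp_eq _ _ (demcD_comp_coneChainEquiv k ℓ)

theorem map_coneChainEquiv_range_demcD (k ℓ : ℕ) :
    ((LinearMap.range (demcD A (k + 1) (ℓ + 1))).prod (LinearMap.range (demcD A k ℓ))).map
      (coneChainEquiv A k ℓ).toLinearMap =
      LinearMap.range (demcD (coneGraph A) (k + 1) (ℓ + 1)) := by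
  rw [← LinearMap.range_prodMap]
  exact map_range_eq_of_comp_eq _ _ (demcD_comp_coneChainEquiv k ℓ)

end Cone

theorem emh_cone_general {V : Type} (A : V → V → Prop) :
    Nonempty (dEMH (coneGraph A) 0 0 ≃ₗ[ℤ] dEMH A 0 0 × ℤ) ∧
    (∀ k ℓ : ℕ, Nonempty
      (dEMH (coneGraph A) (k + 1) (ℓ + 1) ≃ₗ[ℤ] dEMH A (k + 1) (ℓ + 1) × dEMH A k ℓ)) ∧
    (∀ k : ℕ, 1 ≤ k → Nonempty (dEMH (coneGraph A) k 0 ≃ₗ[ℤ] dEMH A k 0)) ∧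
    (∀ ℓ : ℕ, 1 ≤ ℓ → Nonempty (dEMH (coneGraph A) 0 ℓ ≃ₗ[ℤ] dEMH A 0 ℓ)) := by
  refine ⟨⟨dEMHZeroZeroEquiv _ ≪≫ₗ coneChainZeroZeroEquiv A ≪≫ₗ
      (dEMHZeroZeroEquiv A).symm.prodCongr (LinearEquiv.refl ℤ ℤ)⟩,
    fun k ℓ => ⟨(subquotientEquiv (coneChainEquiv A k ℓ) (map_coneChainEquiv_demcCycles k ℓ)
      (map_coneChainEquiv_range_demcD k ℓ)).symm ≪≫ₗ subquotientProdEquiv _ _ _ _⟩,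
    fun k hk => ?_, fun ℓ hℓ => ?_⟩
  -- in the remaining bidegrees both sides vanish, there being no generators
  · obtain ⟨k, rfl⟩ := Nat.exists_eq_add_of_le' hk
    exact ⟨LinearEquiv.ofSubsingleton _ _⟩
  · obtain ⟨ℓ, rfl⟩ := Nat.exists_eq_add_of_le' hℓ
    exact ⟨LinearEquiv.ofSubsingleton _ _⟩

/-- `EMH_{0,0}(C(G)) ≅ EMH_{0,0}(G) ⊕ ℤ`, and in all other bidegrees
`EMH_{k,ℓ}(C(G)) ≅ EMH_{k,ℓ}(G) ⊕ EMH_{k-1,ℓ-1}(G)` (where the second summand is zero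
if `k = 0` or `ℓ = 0`). -/
theorem emh_cone {V : Type} [Fintype V] (A : V → V → Prop) :
    Nonempty (dEMH (coneGraph A) 0 0 ≃ₗ[ℤ] dEMH A 0 0 × ℤ) ∧
    (∀ k ℓ : ℕ, Nonempty
      (dEMH (coneGraph A) (k + 1) (ℓ + 1) ≃ₗ[ℤ] dEMH A (k + 1) (ℓ + 1) × dEMH A k ℓ)) ∧
    (∀ k : ℕ, 1 ≤ k → Nonempty (dEMH (coneGraph A) k 0 ≃ₗ[ℤ] dEMH A k 0)) ∧
    (∀ ℓ : ℕ, 1 ≤ ℓ → Nonempty (dEMH (coneGraph A) 0 ℓ ≃ₗ[ℤ] dEMH A 0 ℓ)) :=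
  emh_cone_general A
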